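/- arXiv:math/0506453 — 2 statements merged into one kernel-verified Lean document; each statement's English description precedes it below -/
import Mathlib

section
/- Define a bilinear product on the 8-dimensional vector space with basis {e_a : a ∈ (ℤ/2)³} by e_a • e_b = F(a,b)·e_{a+b}, with F the octonion cochain. Then for any a, b, c ∈ (ℤ/2)³ that are linearly dependent over ℤ/2, the product associates: e_a • (e_b • e_c) = (e_a • e_b) • e_c. -/
/-- The exponent (in `ℤ/2`) of the octonion cochain on `(ℤ/2)³`. -/
def octExpo (a b : Fin 3 → ZMod 2) : ZMod 2 :=
  a 0 * b 0 + a 0 * b 1 + a 0 * b 2 + a 1 * b 1 + a 1 * b 2 + a 2 * b 2 +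
    a 0 * b 1 * b 2 + b 0 * a 1 * b 2 + b 0 * b 1 * a 2

/-- The octonion cochain with values in `ℂ`. -/
def octF (a b : Fin 3 → ZMod 2) : ℂ := (-1 : ℂ) ^ (octExpo a b).val

/-- The twisted group algebra product on `ℂ[(ℤ/2)³]` (elements as functions
`(ℤ/2)³ → ℂ`): `e_a • e_b = F(a,b) e_{a+b}`. -/
noncomputable def bul (f g : (Fin 3 → ZMod 2) → ℂ) : (Fin 3 → ZMod 2) → ℂ :=
  fun x => ∑ p : (Fin 3 → ZMod 2) × (Fin 3 → ZMod 2),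
    if p.1 + p.2 = x then octF p.1 p.2 * f p.1 * g p.2 else 0

/-- Basis element `e_a` of the twisted group algebra. -/
def ee (a : Fin 3 → ZMod 2) : (Fin 3 → ZMod 2) → ℂ :=
  fun x => if x = a then 1 else 0

lemma key : ∀ g0 g1 g2 a0 a1 a2 b0 b1 b2 c0 c1 c2 : ZMod 2,
    (¬(g0 = 0 ∧ g1 = 0 ∧ g2 = 0)) →
    g0*a0+g1*b0+g2*c0 = 0 → g0*a1+g1*b1+g2*c1 = 0 → g0*a2+g1*b2+g2*c2 = 0 →
    (a0*(b0+c0) + a0*(b1+c1) + a0*(b2+c2) + a1*(b1+c1) + a1*(b2+c2) + a2*(b2+c2) +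
      a0*(b1+c1)*(b2+c2) + (b0+c0)*a1*(b2+c2) + (b0+c0)*(b1+c1)*a2)
    + (b0*c0 + b0*c1 + b0*c2 + b1*c1 + b1*c2 + b2*c2 + b0*c1*c2 + c0*b1*c2 + c0*c1*b2)
    = (a0*b0 + a0*b1 + a0*b2 + a1*b1 + a1*b2 + a2*b2 + a0*b1*b2 + b0*a1*b2 + b0*b1*a2)
    + ((a0+b0)*c0 + (a0+b0)*c1 + (a0+b0)*c2 + (a1+b1)*c1 + (a1+b1)*c2 + (a2+b2)*c2 +
      (a0+b0)*c1*c2 + c0*(a1+b1)*c2 + c0*c1*(a2+b2)) := by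
  decide

lemma bul_ee (a b : Fin 3 → ZMod 2) :
    bul (ee a) (ee b) = fun x => if x = a + b then octF a b else 0 := by
  funext x
  rw [bul, Fintype.sum_prod_type]
  rw [Finset.sum_eq_single a]
  · rw [Finset.sum_eq_single b]
    · simp [ee, eq_comm]
    · intro y _ hy; simp [ee, hy]
    · simp
  · intro y _ hy
    apply Finset.sum_eq_zero; intro z _; simp [ee, hy]
  · simp

lemma bul_smul (f g : (Fin 3 → ZMod 2) → ℂ) (s : ℂ) :
    bul f (fun x => s * g x) = fun x => s * bul f g x := by
  funext x
  rw [bul, bul, Finset.mul_sum]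
  congr 1; funext p
  split <;> ring

lemma smul_bul (f g : (Fin 3 → ZMod 2) → ℂ) (s : ℂ) :
    bul (fun x => s * f x) g = fun x => s * bul f g x := by
  funext x
  rw [bul, bul, Finset.mul_sum]
  congr 1; funext p
  split <;> ring

lemma neg_one_pow_add (x y : ZMod 2) :
    (-1 : ℂ) ^ x.val * (-1) ^ y.val = (-1) ^ (x + y).val := by
  rw [← pow_add, ZMod.val_add, ← neg_one_pow_eq_pow_mod_two]

lemma expo_key (a b c : Fin 3 → ZMod 2) (g : Fin 3 → ZMod 2)
    (hne : ¬(g 0 = 0 ∧ g 1 = 0 ∧ g 2 = 0))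
    (hdep : ∀ j, g 0 * a j + g 1 * b j + g 2 * c j = 0) :
    octExpo a (b + c) + octExpo b c = octExpo a b + octExpo (a + b) c := by
  simp only [octExpo, Pi.add_apply]
  exact key (g 0) (g 1) (g 2) (a 0) (a 1) (a 2) (b 0) (b 1) (b 2) (c 0) (c 1) (c 2)
    hne (hdep 0) (hdep 1) (hdep 2)

/-- the octonion product associates on basis elements whose degrees are
linearly dependent over `ℤ/2` (alternativity). -/
theorem octonion_alternativity (a b c : Fin 3 → ZMod 2)
    (hdep : ¬ LinearIndependent (ZMod 2) ![a, b, c]) :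
    bul (ee a) (bul (ee b) (ee c)) = bul (bul (ee a) (ee b)) (ee c) := by
  rw [Fintype.not_linearIndependent_iff] at hdep
  obtain ⟨g, hsum, i, hi⟩ := hdep
  have hne : ¬(g 0 = 0 ∧ g 1 = 0 ∧ g 2 = 0) := by
    rintro ⟨h0, h1, h2⟩
    fin_cases i <;> simp_all
  have hpt : ∀ j, g 0 * a j + g 1 * b j + g 2 * c j = 0 := by
    intro j
    have := congrFun (by simpa [Fin.sum_univ_three] using hsum) j
    simpa [Pi.add_apply] using this
  have hexpo := expo_key a b c g hne hpt
  have hcoef : octF a (b + c) * octF b c = octF a b * octF (a + b) c := by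
    rw [octF, octF, octF, octF, neg_one_pow_add, neg_one_pow_add, hexpo]
  rw [bul_ee b c, bul_ee a b]
  have h1 : (fun x => if x = b + c then octF b c else 0)
      = fun x => octF b c * ee (b + c) x := by
    funext x; simp [ee, mul_ite]
  have h2 : (fun x => if x = a + b then octF a b else 0)
      = fun x => octF a b * ee (a + b) x := by
    funext x; simp [ee, mul_ite]
  rw [h1, h2, bul_smul, smul_bul, bul_ee, bul_ee]
  funext x
  simp only
  rw [show a + (b + c) = a + b + c by abel]
  split
  · rw [mul_comm (octF b c), hcoef, mul_comm (octF a b)]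
  · ring
end

section
/- In the octonion twisted group algebra with its differential calculus (relations u•du = -du•u, u•dv relations as generated by τᵢ), let γ = λu + μv with λ,μ ∈ ℂ, λ² ≠ μ². Then γ has convolution inverse γ⁻¹ = (λu - μv)/(λ² - μ²) in the sense that evaluating the deformed convolution product gives 1, and the curvature of the pure gauge field: d(γ⁻¹ *• dγ) + (γ⁻¹ *• dγ) *• (γ⁻¹ *• dγ) = 0, where the deformed products insert the cochain factors F(a,b) between components of degrees a,b. -/
set_option maxHeartbeats 1000000 in
/-- in the octonion differential calculus (the twisted group algebra of
`(ℤ/2)³` with the octonion cochain, `τᵢ` anticommuting with `e_a τᵢ = (-1)^{aᵢ}τᵢ e_a`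
and `de_a = -2 e_a Σᵢ aᵢτᵢ`), the element `γ = λu + μv` (with `λ² ≠ μ²`) has
convolution inverse `γ⁻¹ = (λu - μv)/(λ²-μ²)` (the deformed convolution product, which
inserts cochain factors `F(a,b)` between homogeneous components of degrees `a,b`,
evaluates to `1`), and the pure gauge field `X = γ⁻¹ *• dγ` is flat:
`dX + X *• X = 0`. -/
theorem octonion_pure_gauge_flat {Ω : Type*} [Ring Ω] [Algebra ℂ Ω]
    (E : (Fin 3 → ZMod 2) → Ω)
    (hE0 : E 0 = 1)
    (hEmul : ∀ a b, E a * E b = octF a b • E (a + b))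
    (τ : Fin 3 → Ω)
    (hEτ : ∀ (a : Fin 3 → ZMod 2) (i : Fin 3),
      E a * τ i = ((-1 : ℂ) ^ (a i).val) • (τ i * E a))
    (hττ : ∀ i j : Fin 3, τ i * τ j = -(τ j * τ i))
    (d : Ω →ₗ[ℂ] Ω)
    (hdE : ∀ a, d (E a) = (-2 : ℂ) • (E a * ∑ i, (((a i).val : ℂ)) • τ i))
    (hdτ : ∀ i, d (τ i) = 0)
    (hd2 : ∀ x, d (d x) = 0)
    (hleib : ∀ (a : Fin 3 → ZMod 2) (ω : Ω),
      d (E a * ω) = d (E a) * ω + E a * d ω)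
    (lam mu : ℂ) (hne : lam ^ 2 ≠ mu ^ 2) :
    ∀ u v : Ω, u = E ![1, 0, 0] → v = E ![0, 1, 0] →
    -- (i) `γ⁻¹ *• γ = 1` for `γ = λu + μv`, `γ⁻¹ = (λu - μv)/(λ²-μ²)`:
    (octF ![1, 0, 0] ![1, 0, 0] * (lam / (lam ^ 2 - mu ^ 2)) * lam) • (u * u) +
      (octF ![1, 0, 0] ![0, 1, 0] * (lam / (lam ^ 2 - mu ^ 2)) * mu) • (u * v) +
      (octF ![0, 1, 0] ![1, 0, 0] * (-mu / (lam ^ 2 - mu ^ 2)) * lam) • (v * u) +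
      (octF ![0, 1, 0] ![0, 1, 0] * (-mu / (lam ^ 2 - mu ^ 2)) * mu) • (v * v) = 1 ∧
    -- (ii) the pure gauge field `X = γ⁻¹ *• dγ` has zero curvature `dX + X *• X = 0`,
    -- where `X *• X` sums cochain-weighted products of the homogeneous components:
    (∀ X : Ω,
      X = (lam ^ 2 - mu ^ 2)⁻¹ •
          ((-(lam ^ 2)) • (u * d u) - (lam * mu) • (u * d v + v * d u) +
            (mu ^ 2) • (v * d v)) →
      ∀ c : Fin 4 → (Fin 3 → ZMod 2) × Ω,
        c = ![(0, (-(lam ^ 2) / (lam ^ 2 - mu ^ 2)) • (u * d u)),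
              (![1, 1, 0], (-(lam * mu) / (lam ^ 2 - mu ^ 2)) • (u * d v)),
              (![1, 1, 0], (-(lam * mu) / (lam ^ 2 - mu ^ 2)) • (v * d u)),
              (0, (mu ^ 2 / (lam ^ 2 - mu ^ 2)) • (v * d v))] →
        d X + ∑ p : Fin 4, ∑ q : Fin 4,
          octF (c p).1 (c q).1 • ((c p).2 * (c q).2) = 0) := by

  intro u v hu hv
  subst hu hv
  have hD : lam ^ 2 - mu ^ 2 ≠ 0 := sub_ne_zero.mpr hne
  have hadd_aa : (![1,0,0] : Fin 3 → ZMod 2) + ![1,0,0] = 0 := by decide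
  have hadd_ab : (![1,0,0] : Fin 3 → ZMod 2) + ![0,1,0] = ![1,1,0] := by decide
  have hadd_ba : (![0,1,0] : Fin 3 → ZMod 2) + ![1,0,0] = ![1,1,0] := by decide
  have hadd_bb : (![0,1,0] : Fin 3 → ZMod 2) + ![0,1,0] = 0 := by decide
  have hFaa : octF ![1,0,0] ![1,0,0] = -1 := by
    norm_num [octF, show ((1 : ZMod 2)).val = 1 from rfl, show octExpo ![1,0,0] ![1,0,0] = 1 from by decide]
  have hFab : octF ![1,0,0] ![0,1,0] = -1 := by
    norm_num [octF, show ((1 : ZMod 2)).val = 1 from rfl, show octExpo ![1,0,0] ![0,1,0] = 1 from by decide]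
  have hFba : octF ![0,1,0] ![1,0,0] = 1 := by
    norm_num [octF, show ((1 : ZMod 2)).val = 1 from rfl, show octExpo ![0,1,0] ![1,0,0] = 0 from by decide]
  have hFbb : octF ![0,1,0] ![0,1,0] = -1 := by
    norm_num [octF, show ((1 : ZMod 2)).val = 1 from rfl, show octExpo ![0,1,0] ![0,1,0] = 1 from by decide]
  have hFww : octF ![1,1,0] ![1,1,0] = -1 := by
    norm_num [octF, show ((1 : ZMod 2)).val = 1 from rfl, show octExpo ![1,1,0] ![1,1,0] = 1 from by decide]
  have hF00 : octF 0 0 = 1 := by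
    norm_num [octF, show ((1 : ZMod 2)).val = 1 from rfl, show octExpo 0 0 = 0 from by decide]
  have hF0w : octF 0 ![1,1,0] = 1 := by
    norm_num [octF, show ((1 : ZMod 2)).val = 1 from rfl, show octExpo 0 ![1,1,0] = 0 from by decide]
  have hFw0 : octF ![1,1,0] 0 = 1 := by
    norm_num [octF, show ((1 : ZMod 2)).val = 1 from rfl, show octExpo ![1,1,0] 0 = 0 from by decide]
  have huu : E ![1,0,0] * E ![1,0,0] = (-1 : ℂ) • 1 := by
    rw [hEmul, hadd_aa, hFaa, hE0]
  have huv : E ![1,0,0] * E ![0,1,0] = (-1 : ℂ) • E ![1,1,0] := by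
    rw [hEmul, hadd_ab, hFab]
  have hvu : E ![0,1,0] * E ![1,0,0] = E ![1,1,0] := by
    rw [hEmul, hadd_ba, hFba, one_smul]
  have hvv : E ![0,1,0] * E ![0,1,0] = (-1 : ℂ) • 1 := by
    rw [hEmul, hadd_bb, hFbb, hE0]
  have hww : E ![1,1,0] * E ![1,1,0] = (-1 : ℂ) • 1 := by
    rw [hEmul, show (![1,1,0] : Fin 3 → ZMod 2) + ![1,1,0] = 0 from by decide, hFww, hE0]
  have hτsq : ∀ i : Fin 3, τ i * τ i = 0 := by
    intro i
    have h := hττ i i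
    have h2 : (2 : ℂ) • (τ i * τ i) = 0 := by
      rw [two_smul]
      nth_rewrite 1 [h]
      exact neg_add_cancel _
    calc τ i * τ i = (2⁻¹ : ℂ) • ((2 : ℂ) • (τ i * τ i)) := by
          rw [smul_smul]; norm_num
      _ = 0 := by rw [h2, smul_zero]
  have hw0 : E ![1,1,0] * τ 0 = -(τ 0 * E ![1,1,0]) := by
    have h := hEτ ![1,1,0] 0
    simpa [show ((1 : ZMod 2)).val = 1 from rfl] using h
  have hw1 : E ![1,1,0] * τ 1 = -(τ 1 * E ![1,1,0]) := by
    have h := hEτ ![1,1,0] 1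
    simpa [show ((1 : ZMod 2)).val = 1 from rfl] using h
  have hτ0Ew : τ 0 * E ![1,1,0] = -(E ![1,1,0] * τ 0) := by rw [hw0, neg_neg]
  have hτ1Ew : τ 1 * E ![1,1,0] = -(E ![1,1,0] * τ 1) := by rw [hw1, neg_neg]
  have hdu : d (E ![1,0,0]) = (-2 : ℂ) • (E ![1,0,0] * τ 0) := by
    rw [hdE]
    congr 1
    rw [Fin.sum_univ_three]
    norm_num [show ((1 : ZMod 2)).val = 1 from rfl, show (![1,0,0] : Fin 3 → ZMod 2) 2 = 0 from rfl,
      show ((0 : ZMod 2)).val = 0 from rfl, -ZMod.natCast_val]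
  have hdv : d (E ![0,1,0]) = (-2 : ℂ) • (E ![0,1,0] * τ 1) := by
    rw [hdE]
    congr 1
    rw [Fin.sum_univ_three]
    norm_num [show ((1 : ZMod 2)).val = 1 from rfl, show (![0,1,0] : Fin 3 → ZMod 2) 2 = 0 from rfl,
      show ((0 : ZMod 2)).val = 0 from rfl, -ZMod.natCast_val]
  have hdw : d (E ![1,1,0]) = (-2 : ℂ) • (E ![1,1,0] * (τ 0 + τ 1)) := by
    rw [hdE]
    congr 1
    rw [Fin.sum_univ_three]
    norm_num [show ((1 : ZMod 2)).val = 1 from rfl, show (![1,1,0] : Fin 3 → ZMod 2) 2 = 0 from rfl,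
      show ((0 : ZMod 2)).val = 0 from rfl, -ZMod.natCast_val]
  have huDu : E ![1,0,0] * d (E ![1,0,0]) = (2 : ℂ) • τ 0 := by
    rw [hdu, mul_smul_comm, ← mul_assoc, huu]
    simp
  have hvDv : E ![0,1,0] * d (E ![0,1,0]) = (2 : ℂ) • τ 1 := by
    rw [hdv, mul_smul_comm, ← mul_assoc, hvv]
    simp
  have huDv : E ![1,0,0] * d (E ![0,1,0]) = (2 : ℂ) • (E ![1,1,0] * τ 1) := by
    rw [hdv, mul_smul_comm, ← mul_assoc, huv]
    simp
  have hvDu : E ![0,1,0] * d (E ![1,0,0]) = (-2 : ℂ) • (E ![1,1,0] * τ 0) := by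
    rw [hdu, mul_smul_comm, ← mul_assoc, hvu]
  have hdEwτ1 : d (E ![1,1,0] * τ 1) = (-2 : ℂ) • (E ![1,1,0] * (τ 0 * τ 1)) := by
    rw [hleib, hdτ, mul_zero, add_zero, hdw, smul_mul_assoc, mul_assoc, add_mul,
      hτsq, add_zero]
  have hdEwτ0 : d (E ![1,1,0] * τ 0) = (2 : ℂ) • (E ![1,1,0] * (τ 0 * τ 1)) := by
    rw [hleib, hdτ, mul_zero, add_zero, hdw, smul_mul_assoc, mul_assoc, add_mul,
      hτsq, zero_add, hττ 1 0]
    simp [mul_neg]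
  -- product lemmas
  have p01 : τ 0 * (E ![1,1,0] * τ 1) = -(E ![1,1,0] * (τ 0 * τ 1)) := by
    rw [← mul_assoc, hτ0Ew, neg_mul, mul_assoc]
  have p02 : τ 0 * (E ![1,1,0] * τ 0) = 0 := by
    rw [← mul_assoc, hτ0Ew, neg_mul, mul_assoc, hτsq, mul_zero, neg_zero]
  have p31 : τ 1 * (E ![1,1,0] * τ 1) = 0 := by
    rw [← mul_assoc, hτ1Ew, neg_mul, mul_assoc, hτsq, mul_zero, neg_zero]
  have p32 : τ 1 * (E ![1,1,0] * τ 0) = E ![1,1,0] * (τ 0 * τ 1) := by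
    rw [← mul_assoc, hτ1Ew, neg_mul, mul_assoc, hττ 1 0, mul_neg, neg_neg]
  have p10 : (E ![1,1,0] * τ 1) * τ 0 = -(E ![1,1,0] * (τ 0 * τ 1)) := by
    rw [mul_assoc, hττ 1 0, mul_neg]
  have p13 : (E ![1,1,0] * τ 1) * τ 1 = 0 := by
    rw [mul_assoc, hτsq, mul_zero]
  have p20 : (E ![1,1,0] * τ 0) * τ 0 = 0 := by
    rw [mul_assoc, hτsq, mul_zero]
  have p23 : (E ![1,1,0] * τ 0) * τ 1 = E ![1,1,0] * (τ 0 * τ 1) := by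
    rw [mul_assoc]
  have p11 : (E ![1,1,0] * τ 1) * (E ![1,1,0] * τ 1) = 0 := by
    rw [mul_assoc, p31, mul_zero]
  have p22 : (E ![1,1,0] * τ 0) * (E ![1,1,0] * τ 0) = 0 := by
    rw [mul_assoc, p02, mul_zero]
  have p12 : (E ![1,1,0] * τ 1) * (E ![1,1,0] * τ 0) = -(τ 0 * τ 1) := by
    rw [mul_assoc, p32, ← mul_assoc, hww]
    simp
  have p21 : (E ![1,1,0] * τ 0) * (E ![1,1,0] * τ 1) = τ 0 * τ 1 := by
    rw [mul_assoc, p01, mul_neg, ← mul_assoc, hww]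
    simp
  refine ⟨?_, ?_⟩
  · rw [hFaa, hFab, hFba, hFbb, huu, huv, hvu, hvv]
    match_scalars <;> field_simp <;> ring
  · intro X hX c hc
    subst hX hc
    simp only [huDu, huDv, hvDu, hvDv, Fin.sum_univ_four]
    simp only [Matrix.cons_val_zero, Matrix.cons_val_one, Matrix.head_cons,
      Matrix.cons_val_two, Matrix.tail_cons, Matrix.cons_val_three,
      Matrix.head_fin_const]
    simp only [hF00, hF0w, hFw0, hFww]
    simp only [map_smul, map_add, map_sub, hdτ, hdEwτ1, hdEwτ0, smul_zero,
      add_zero, zero_add, sub_zero, zero_sub, smul_neg, smul_smul]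
    simp only [smul_mul_assoc, mul_smul_comm, smul_smul]
    simp only [p01, p02, p31, p32, p10, p13, p20, p23, p11, p22, p12, p21,
      hτsq, hττ 1 0, mul_zero, smul_zero, mul_neg, smul_neg]
    match_scalars
    · linear_combination (-8 * lam * mu * (lam ^ 2 - mu ^ 2)⁻¹) * mul_inv_cancel₀ hD
    · ring
end
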